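/- Let k: ℤ → [0,∞) be a nontrivial kernel with k(0)=0, k(−j)=k(j) for all j ∈ ℤ, and ∑_{j∈ℤ} k(j) < ∞. Suppose that Ĉ_δ(k) := ∑_{j∈ℤ} k(j)^{1−δ} < ∞ for some δ ∈ (0,1), and set γ = (1+δ)/δ. Then there exists a constant c > 0 such that for every x ∈ ℤ and every bounded u: ℤ → ℝ one has Ψ_{2,Υ}(u)(x) ≥ c·|Lu(x)|^γ. -/

import Mathlib

open scoped BigOperators
open Filter Set

noncomputable section

/-- `Υ(r) = e^r − 1 − r`. -/
def Ups (r : ℝ) : ℝ := Real.exp r - 1 - r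

/-- `H(x) = (1/2) e^{−x} Υ(2x)`. -/
def Hfun (x : ℝ) : ℝ := (1 / 2) * Real.exp (-x) * Ups (2 * x)

/-- The long-range jump operator `L u (x) = ∑_{j∈ℤ} k(j)(u(x+j) − u(x))`. -/
def Lop (k : ℤ → ℝ) (u : ℤ → ℝ) (x : ℤ) : ℝ := ∑' j : ℤ, k j * (u (x + j) - u x)

/-- `Ψ_Υ(u)(x) = ∑_{j∈ℤ} k(j) Υ(u(x+j) − u(x))`. -/
def PsiUps (k : ℤ → ℝ) (u : ℤ → ℝ) (x : ℤ) : ℝ := ∑' j : ℤ, k j * Ups (u (x + j) - u x)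

/-- `Ψ_{2,Υ}(u)(x)`. -/
def Psi2 (k : ℤ → ℝ) (u : ℤ → ℝ) (x : ℤ) : ℝ :=
  (1 / 2) * ∑' p : ℤ × ℤ, k p.1 * k p.2 * Real.exp (u (x + p.2) - u x) *
    Ups (u (x + p.1 + p.2) - u (x + p.1) - u (x + p.2) + u x)

/-- A bounded function on `ℤ`. -/
def BddFun (u : ℤ → ℝ) : Prop := ∃ M : ℝ, ∀ x : ℤ, |u x| ≤ M

/-- A nontrivial symmetric integrable kernel on `ℤ` vanishing at `0`. -/
structure IsKernel (k : ℤ → ℝ) : Prop where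
  nonneg : ∀ j, 0 ≤ k j
  zero_at_zero : k 0 = 0
  symm : ∀ j, k (-j) = k j
  summable : Summable k
  nontrivial : ∃ j, k j ≠ 0

/-- A CD-function: continuous on `[0,∞)`, nonnegative, `F(0)=0`, `r ↦ F(r)/r` strictly
increasing on `(0,∞)` and `1/F` integrable at `∞`. -/
def IsCDFunction (F : ℝ → ℝ) : Prop :=
  ContinuousOn F (Ici 0) ∧ (∀ r, 0 ≤ r → 0 ≤ F r) ∧ F 0 = 0 ∧
    StrictMonoOn (fun r => F r / r) (Ioi 0) ∧
    ∃ a, 0 < a ∧ MeasureTheory.IntegrableOn (fun r => 1 / F r) (Ici a)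

/-- The curvature-dimension condition `CD_Υ(0,F)` for the operator generated by `k`. -/
def CDUps (k : ℤ → ℝ) (F : ℝ → ℝ) : Prop :=
  ∀ u : ℤ → ℝ, BddFun u → ∀ x : ℤ, 0 ≤ -Lop k u x → F (-Lop k u x) ≤ Psi2 k u x

/-!
Keep in `Ψ₂` only the pairs `(j, -j)` and `(-j, j)`: there the inner second difference is
`-s j` with `s j = u (x + j) + u (x - j) - 2 u x`, and AM–GM with an elementary inequality for `Υ`
gives `Ψ₂(u)(x) ≥ ½ ∑ k(j)² Υ(|s j| / 2)`. By the symmetry of `k`, `Lu(x) = ∑ k(j) s j / 2`.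
Since `z ^ γ ≤ ⌈γ⌉! Υ(z)` for `z ≥ 0` and `γ ≥ 2`, Hölder's inequality with exponents `γ` and
`1 + δ`, applied to `k(j) = (k(j)²)^(1/γ) (k(j)^(1-δ))^(1/(1+δ))`, yields
`|Lu(x)| ^ γ ≤ ⌈γ⌉! Ĉ_δ ^ (1/δ) ∑ k(j)² Υ(|s j| / 2)`.
-/

open Real Finset
open scoped Nat

lemma Ups_nonneg (r : ℝ) : 0 ≤ Ups r := by
  unfold Ups; linarith [add_one_le_exp r]

lemma Ups_le_exp_add {r R : ℝ} (h : |r| ≤ R) : Ups r ≤ exp R + R := by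
  obtain ⟨h₁, h₂⟩ := abs_le.1 h
  unfold Ups; linarith [exp_le_exp.2 h₂]

lemma pow_le_factorial_mul_Ups {m : ℕ} (hm : 2 ≤ m) {z : ℝ} (hz : 0 ≤ z) :
    z ^ m ≤ m ! * Ups z := by
  have hexp := sum_le_exp_of_nonneg hz (m + 1)
  have hlow : ∑ i ∈ range 2, z ^ i / i ! ≤ ∑ i ∈ range m, z ^ i / i ! :=
    sum_le_sum_of_subset_of_nonneg (range_subset_range.2 hm) fun i _ _ => by positivity
  rw [sum_range_succ] at hexp
  norm_num [sum_range_succ] at hlow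
  rw [mul_comm, ← div_le_iff₀ (by positivity)]
  unfold Ups; linarith

lemma rpow_le_factorial_mul_Ups {p : ℝ} (hp : 2 ≤ p) {z : ℝ} (hz : 0 ≤ z) :
    z ^ p ≤ ⌈p⌉₊ ! * Ups z := by
  have hm : 2 ≤ ⌈p⌉₊ := Nat.lt_ceil.2 (by norm_num; linarith)
  rcases le_total z 1 with h1 | h1
  · calc z ^ p ≤ z ^ (2 : ℕ) := by
          rw [← rpow_natCast]; exact rpow_le_rpow_of_exponent_ge' hz h1 (by norm_num) (by simpa)
      _ ≤ (2 ! : ℕ) * Ups z := pow_le_factorial_mul_Ups le_rfl hz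
      _ ≤ ⌈p⌉₊ ! * Ups z := by
          gcongr
          exact Ups_nonneg z
  · calc z ^ p ≤ z ^ ⌈p⌉₊ := by
          rw [← rpow_natCast]; exact rpow_le_rpow_of_exponent_le h1 (Nat.le_ceil p)
      _ ≤ ⌈p⌉₊ ! * Ups z := pow_le_factorial_mul_Ups hm hz

lemma Ups_abs_half_le_exp_mul (s : ℝ) : Ups (|s| / 2) ≤ exp (s / 2) * Ups (-s) := by
  rcases le_total 0 s with hs | hs
  · rw [abs_of_nonneg hs]
    have hE : exp (s / 2) * exp (-(s / 2)) = 1 := by rw [← exp_add]; simp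
    have hsq : exp (-s) = exp (-(s / 2)) ^ 2 := by rw [← exp_nat_mul]; ring_nf
    have := add_one_le_exp (-(s / 2))
    unfold Ups
    rw [hsq]
    nlinarith [exp_pos (s / 2), exp_pos (-(s / 2))]
  · obtain ⟨t, ht, rfl⟩ : ∃ t, 0 ≤ t ∧ s = -t := ⟨-s, by linarith, by ring⟩
    rw [abs_neg, abs_of_nonneg ht, neg_neg, neg_div]
    have hE : exp (-(t / 2)) * exp (t / 2) = 1 := by rw [← exp_add]; simp
    have hsq : exp t = exp (t / 2) ^ 2 := by rw [← exp_nat_mul]; ring_nf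
    have := add_one_le_exp (t / 2)
    unfold Ups
    rw [hsq]
    nlinarith [exp_pos (t / 2), exp_pos (-(t / 2))]

lemma exp_half_add_le (a b : ℝ) : exp ((a + b) / 2) ≤ (exp a + exp b) / 2 := by
  have ha : exp a = exp (a / 2) ^ 2 := by rw [← exp_nat_mul]; ring_nf
  have hb : exp b = exp (b / 2) ^ 2 := by rw [← exp_nat_mul]; ring_nf
  rw [add_div, exp_add, ha, hb]
  nlinarith [sq_nonneg (exp (a / 2) - exp (b / 2))]

lemma Ups_abs_half_le (a b : ℝ) :
    Ups (|a + b| / 2) ≤ (exp a + exp b) / 2 * Ups (-(a + b)) :=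
  (Ups_abs_half_le_exp_mul _).trans
    (mul_le_mul_of_nonneg_right (exp_half_add_le a b) (Ups_nonneg _))

theorem summable_and_tsum_mul_rpow_le {ι : Type*} {k z : ι → ℝ} {δ : ℝ} (hδ0 : 0 < δ)
    (hδ1 : δ ≤ 1) (hk : ∀ i, 0 ≤ k i) (hz : ∀ i, 0 ≤ z i)
    (hkδ : Summable fun i => k i ^ (1 - δ)) (hW : Summable fun i => k i ^ 2 * Ups (z i)) :
    (Summable fun i => k i * z i) ∧
      (∑' i, k i * z i) ^ ((1 + δ) / δ) ≤
        ⌈(1 + δ) / δ⌉₊ ! * (∑' i, k i ^ (1 - δ)) ^ (1 / δ) * ∑' i, k i ^ 2 * Ups (z i) := by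
  set p := (1 + δ) / δ with hp
  set C : ℝ := ↑(⌈p⌉₊)!
  have hp2 : 2 ≤ p := by rw [hp, le_div_iff₀ hδ0]; linarith
  have hpq : p.HolderConjugate (1 + δ) := by
    rw [Real.holderConjugate_iff]; exact ⟨by linarith, by rw [hp]; field_simp; ring⟩
  set f : ι → ℝ := fun i => (C * (k i ^ 2 * Ups (z i))) ^ p⁻¹
  set g : ι → ℝ := fun i => (k i ^ (1 - δ)) ^ (1 + δ)⁻¹
  have hf_pow (i : ι) : f i ^ p = C * (k i ^ 2 * Ups (z i)) :=
    rpow_inv_rpow (by have := Ups_nonneg (z i); positivity) (by positivity)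
  have hg_pow (i : ι) : g i ^ (1 + δ) = k i ^ (1 - δ) :=
    rpow_inv_rpow (rpow_nonneg (hk i) _) (by positivity)
  have hk_split (i : ι) : k i = (k i ^ 2) ^ p⁻¹ * g i := by
    simp only [g]
    rw [← rpow_natCast, ← rpow_mul (hk i), ← rpow_mul (hk i), ← rpow_add' (hk i)]
    · convert (rpow_one (k i)).symm using 2; rw [hp]; field_simp; ring
    · rw [hp]; field_simp; positivity
  have hz_le (i : ι) : z i ≤ (C * Ups (z i)) ^ p⁻¹ :=
    (le_rpow_inv_iff_of_pos (hz i) (by have := Ups_nonneg (z i); positivity)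
      (by positivity)).2 (rpow_le_factorial_mul_Ups hp2 (hz i))
  have hpoint (i : ι) : k i * z i ≤ f i * g i := by
    calc k i * z i ≤ (k i ^ 2) ^ p⁻¹ * g i * (C * Ups (z i)) ^ p⁻¹ := by
          rw [← hk_split]; exact mul_le_mul_of_nonneg_left (hz_le i) (hk i)
      _ = f i * g i := by
          simp only [f]
          rw [mul_left_comm C, mul_rpow (sq_nonneg _) (by have := Ups_nonneg (z i); positivity)]
          ring
  obtain ⟨hfg, hHolder⟩ := summable_and_inner_le_Lp_mul_Lq_tsum_of_nonneg hpq (f := f) (g := g)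
    (fun i => rpow_nonneg (by have := Ups_nonneg (z i); positivity) _)
    (fun i => rpow_nonneg (rpow_nonneg (hk i) _) _)
    (by simpa only [hf_pow] using hW.mul_left C) (by simpa only [hg_pow] using hkδ)
  simp only [hf_pow, hg_pow, tsum_mul_left] at hHolder
  have hkz : Summable fun i => k i * z i :=
    hfg.of_nonneg_of_le (fun i => mul_nonneg (hk i) (hz i)) hpoint
  have hW0 : 0 ≤ ∑' i, k i ^ 2 * Ups (z i) :=
    tsum_nonneg fun i => mul_nonneg (sq_nonneg _) (Ups_nonneg _)
  have hĈ0 : 0 ≤ ∑' i, k i ^ (1 - δ) := tsum_nonneg fun i => rpow_nonneg (hk i) _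
  refine ⟨hkz, ?_⟩
  calc (∑' i, k i * z i) ^ p
      ≤ ((C * ∑' i, k i ^ 2 * Ups (z i)) ^ (1 / p) * (∑' i, k i ^ (1 - δ)) ^ (1 / (1 + δ))) ^ p :=
        rpow_le_rpow (tsum_nonneg fun i => mul_nonneg (hk i) (hz i))
          ((hkz.tsum_le_tsum hpoint hfg).trans hHolder) (by positivity)
    _ = C * (∑' i, k i ^ (1 - δ)) ^ (1 / δ) * ∑' i, k i ^ 2 * Ups (z i) := by
        rw [mul_rpow (by positivity) (by positivity), ← rpow_mul (by positivity),
          ← rpow_mul hĈ0, one_div_mul_cancel (by positivity), rpow_one,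
          show 1 / (1 + δ) * p = 1 / δ by rw [hp]; field_simp]
        ring

lemma summable_mul_of_abs_le {ι : Type*} {k f : ι → ℝ} {C : ℝ} (hk0 : ∀ i, 0 ≤ k i)
    (hk : Summable k) (hf : ∀ i, |f i| ≤ C) : Summable fun i => k i * f i :=
  (hk.mul_right C).of_norm_bounded fun i => by
    rw [norm_mul, norm_of_nonneg (hk0 i)]; exact mul_le_mul_of_nonneg_left (hf i) (hk0 i)

def secondDiff (u : ℤ → ℝ) (x j : ℤ) : ℝ := u (x + j) + u (x - j) - 2 * u x

namespace IsKernel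

variable {k u : ℤ → ℝ}

theorem summable_Psi2_summand (hk : IsKernel k) (hu : BddFun u) (x : ℤ) :
    Summable fun p : ℤ × ℤ => k p.1 * k p.2 * exp (u (x + p.2) - u x) *
      Ups (u (x + p.1 + p.2) - u (x + p.1) - u (x + p.2) + u x) := by
  obtain ⟨M, hM⟩ := hu
  have hb (y : ℤ) := abs_le.1 (hM y)
  have hkk : Summable fun p : ℤ × ℤ => k p.1 * k p.2 :=
    hk.summable.mul_of_nonneg hk.summable hk.nonneg hk.nonneg
  refine (summable_mul_of_abs_le (fun p => mul_nonneg (hk.nonneg p.1) (hk.nonneg p.2)) hkk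
    (f := fun p => exp (u (x + p.2) - u x) *
      Ups (u (x + p.1 + p.2) - u (x + p.1) - u (x + p.2) + u x))
    (C := exp (2 * M) * (exp (4 * M) + 4 * M)) fun p => ?_).congr fun p => by ring
  rw [abs_of_nonneg (mul_nonneg (exp_pos _).le (Ups_nonneg _))]
  refine mul_le_mul (exp_le_exp.2 ?_) (Ups_le_exp_add ?_) (Ups_nonneg _) (exp_pos _).le
  · linarith [hb (x + p.2), hb x]
  · rw [abs_le]; constructor <;> linarith [hb (x + p.1 + p.2), hb (x + p.1), hb (x + p.2), hb x]

theorem Lop_eq_tsum_secondDiff (hk : IsKernel k) (hu : BddFun u) (x : ℤ) :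
    Lop k u x = ∑' j, k j * (secondDiff u x j / 2) := by
  obtain ⟨M, hM⟩ := hu
  set b : ℤ → ℝ := fun j => u (x + j) - u x
  have hb (j : ℤ) : |b j| ≤ 2 * M := (abs_sub _ _).trans (by linarith [hM (x + j), hM x])
  have hsum := summable_mul_of_abs_le hk.nonneg hk.summable hb
  have hsum' := summable_mul_of_abs_le hk.nonneg hk.summable fun j => hb (-j)
  have hreflect : ∑' j, k j * b (-j) = ∑' j, k j * b j := by
    rw [← (Equiv.neg ℤ).tsum_eq]; simp only [Equiv.neg_apply, neg_neg, hk.symm]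
  have hsplit (j : ℤ) : k j * (secondDiff u x j / 2) = (k j * b j + k j * b (-j)) / 2 := by
    simp only [secondDiff, b, sub_eq_add_neg]; ring
  rw [tsum_congr hsplit, tsum_div_const, hsum.tsum_add hsum', hreflect]
  unfold Lop; ring

theorem summable_and_half_tsum_le_Psi2 (hk : IsKernel k) (hu : BddFun u) (x : ℤ) :
    (Summable fun j => k j ^ 2 * Ups (|secondDiff u x j| / 2)) ∧
      1 / 2 * ∑' j, k j ^ 2 * Ups (|secondDiff u x j| / 2) ≤ Psi2 k u x := by
  set P : ℤ × ℤ → ℝ := fun p => k p.1 * k p.2 * exp (u (x + p.2) - u x) *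
    Ups (u (x + p.1 + p.2) - u (x + p.1) - u (x + p.2) + u x)
  have hP : Summable P := hk.summable_Psi2_summand hu x
  have hP0 (p : ℤ × ℤ) : 0 ≤ P p :=
    mul_nonneg (mul_nonneg (mul_nonneg (hk.nonneg _) (hk.nonneg _)) (exp_pos _).le) (Ups_nonneg _)
  have hdiag (j : ℤ) : 2 * (k j ^ 2 * Ups (|secondDiff u x j| / 2)) ≤ P (j, -j) + P (-j, j) := by
    set a := u (x + j) - u x
    set b := u (x - j) - u x
    have hs : secondDiff u x j = a + b := by simp only [secondDiff, a, b]; ring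
    have hsum : P (j, -j) + P (-j, j) = k j ^ 2 * (exp a + exp b) * Ups (-(a + b)) := by
      simp only [P, a, b, hk.symm, ← sub_eq_add_neg, add_sub_cancel_right]
      ring_nf
    rw [hs, hsum]
    nlinarith [mul_le_mul_of_nonneg_left (Ups_abs_half_le a b) (sq_nonneg (k j))]
  have hi₁ : Function.Injective fun j : ℤ => (j, -j) := fun i j h => congrArg Prod.fst h
  have hi₂ : Function.Injective fun j : ℤ => (-j, j) := fun i j h => congrArg Prod.snd h
  have hs₁ : Summable fun j => P (j, -j) := hP.comp_injective hi₁
  have hs₂ : Summable fun j => P (-j, j) := hP.comp_injective hi₂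
  have hW : Summable fun j => k j ^ 2 * Ups (|secondDiff u x j| / 2) :=
    ((hs₁.add hs₂).div_const 2).of_nonneg_of_le
      (fun j => mul_nonneg (sq_nonneg _) (Ups_nonneg _)) fun j => by linarith [hdiag j]
  refine ⟨hW, ?_⟩
  calc 1 / 2 * ∑' j, k j ^ 2 * Ups (|secondDiff u x j| / 2)
      ≤ 1 / 2 * ((∑' j, P (j, -j) + ∑' j, P (-j, j)) / 2) := by
        rw [← hs₁.tsum_add hs₂, ← tsum_div_const]
        exact mul_le_mul_of_nonneg_left
          (hW.tsum_le_tsum (fun j => by linarith [hdiag j]) ((hs₁.add hs₂).div_const 2))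
          (by norm_num)
    _ ≤ 1 / 2 * ((∑' p, P p + ∑' p, P p) / 2) := by
        gcongr
        · exact tsum_comp_le_tsum_of_inj hP hP0 hi₁
        · exact tsum_comp_le_tsum_of_inj hP hP0 hi₂
    _ = Psi2 k u x := by unfold Psi2; ring

end IsKernel

/-- Theorem (basic CD result): if `Ĉ_δ(k) = ∑_j k(j)^{1−δ} < ∞` for some `δ ∈ (0,1)`, then
there is `c > 0` such that `Ψ_{2,Υ}(u)(x) ≥ c |Lu(x)|^γ` with `γ = (1+δ)/δ` for every `x` and
every bounded `u`. -/
theorem basic_CD (k : ℤ → ℝ) (hk : IsKernel k) (δ : ℝ) (hδ0 : 0 < δ) (hδ1 : δ < 1)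
    (hsum : Summable fun j : ℤ => k j ^ (1 - δ)) :
    ∃ c : ℝ, 0 < c ∧ ∀ x : ℤ, ∀ u : ℤ → ℝ, BddFun u →
      c * |Lop k u x| ^ ((1 + δ) / δ) ≤ Psi2 k u x := by
  obtain ⟨j₀, hj₀⟩ := hk.nontrivial
  set Ĉ := ∑' j, k j ^ (1 - δ)
  have hĈ : 0 < Ĉ := hsum.tsum_pos (fun j => rpow_nonneg (hk.nonneg j) _) j₀
    (rpow_pos_of_pos ((hk.nonneg j₀).lt_of_ne' hj₀) _)
  refine ⟨1 / (2 * (⌈(1 + δ) / δ⌉₊)! * Ĉ ^ (1 / δ)), by positivity, fun x u hu => ?_⟩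
  obtain ⟨hW, hΨ⟩ := hk.summable_and_half_tsum_le_Psi2 hu x
  obtain ⟨hkz, hHolder⟩ := summable_and_tsum_mul_rpow_le hδ0 hδ1.le hk.nonneg
    (fun j => by positivity) hsum hW
  have hL : |Lop k u x| ≤ ∑' j, k j * (|secondDiff u x j| / 2) := by
    rw [hk.Lop_eq_tsum_secondDiff hu x, ← Real.norm_eq_abs]
    refine tsum_of_norm_bounded hkz.hasSum fun j => ?_
    rw [norm_mul, norm_div, norm_of_nonneg (hk.nonneg j), Real.norm_eq_abs, RCLike.norm_two]
  calc 1 / (2 * (⌈(1 + δ) / δ⌉₊)! * Ĉ ^ (1 / δ)) * |Lop k u x| ^ ((1 + δ) / δ)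
      ≤ 1 / (2 * (⌈(1 + δ) / δ⌉₊)! * Ĉ ^ (1 / δ)) *
          ((⌈(1 + δ) / δ⌉₊)! * Ĉ ^ (1 / δ) * ∑' j, k j ^ 2 * Ups (|secondDiff u x j| / 2)) := by
        gcongr
        exact (rpow_le_rpow (abs_nonneg _) hL (by positivity)).trans hHolder
    _ = 1 / 2 * ∑' j, k j ^ 2 * Ups (|secondDiff u x j| / 2) := by field_simp
    _ ≤ Psi2 k u x := hΨ
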